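/- arXiv:1209.0365 — 5 statements merged into one kernel-verified Lean document; each statement's English description precedes it below -/
import Mathlib

section
/- The number of binary sequences of length n that contain a fixed binary sequence s of length m ≤ n as a (not necessarily contiguous) subsequence equals the number of binary sequences of length n containing at least m zeroes, namely the sum over l from m to n of binomial(n, l). -/
/-!
Let `N(n, s)` be the number of words of length `n` containing `s` as a subsequence. Splitting a
word by its first letter `b` gives `N(n + 1, a :: s) = N(n, s) + N(n, a :: s)`: if `b = a` the first
letter may be matched with `a`, which is never worse, and otherwise the whole of `a :: s` has to
fit into the remaining `n` letters. The tail sums `∑_{l = m}^{n} C(n, l)` satisfy the same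
recursion by Pascal's rule, and both sides agree when `s = []` (`2 ^ n`) and when `n = 0`.
-/

open Finset

variable {α : Type*}

theorem List.cons_sublist_cons_of_ne {a b : α} {l₁ l₂ : List α} (h : a ≠ b) :
    (a :: l₁).Sublist (b :: l₂) ↔ (a :: l₁).Sublist l₂ := by
  simp [List.sublist_cons_iff, h]

theorem Finset.card_filter_univ_fin_cons [Fintype α] {n : ℕ} (p : (Fin (n + 1) → α) → Prop)
    [DecidablePred p] : #{f | p f} = ∑ a : α, #{f : Fin n → α | p (Fin.cons a f)} := by
  simp only [card_filter]
  rw [← (Fin.consEquiv fun _ => α).sum_comp, Fintype.sum_prod_type]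
  rfl

theorem Nat.sum_Icc_choose_succ_succ (m n : ℕ) :
    ∑ l ∈ Icc (m + 1) (n + 1), (n + 1).choose l
      = ∑ l ∈ Icc m n, n.choose l + ∑ l ∈ Icc (m + 1) n, n.choose l := by
  have shift (f : ℕ → ℕ) : ∑ l ∈ Icc (m + 1) (n + 1), f l = ∑ l ∈ Icc m n, f (l + 1) := by
    rw [← map_add_right_Icc, sum_map]
    rfl
  have drop_top : ∑ l ∈ Icc (m + 1) (n + 1), n.choose l = ∑ l ∈ Icc (m + 1) n, n.choose l := by
    refine (sum_subset (Icc_subset_Icc_right n.le_succ) fun l hl hl' => ?_).symm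
    exact Nat.choose_eq_zero_of_lt (by simp only [mem_Icc] at hl hl'; omega)
  simp only [shift, Nat.choose_succ_succ', sum_add_distrib, ← drop_top]

section Supersequences

variable [Fintype α] [DecidableEq α]

def supersequences (n : ℕ) (s : List α) : Finset (Fin n → α) :=
  {S | s.Sublist (List.ofFn S)}

theorem card_supersequences_nil (n : ℕ) :
    #(supersequences n ([] : List α)) = Fintype.card α ^ n := by
  simp [supersequences]

theorem supersequences_zero_cons (a : α) (s : List α) : supersequences 0 (a :: s) = ∅ := by
  simp [supersequences]

end Supersequences

theorem card_supersequences_succ_cons (n : ℕ) (a : Bool) (s : List Bool) :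
    #(supersequences (n + 1) (a :: s)) = #(supersequences n s) + #(supersequences n (a :: s)) := by
  simp only [supersequences, card_filter_univ_fin_cons, Fintype.sum_bool, List.ofFn_cons]
  cases a <;> simp [List.cons_sublist_cons_of_ne, add_comm]

theorem card_supersequences (n : ℕ) (s : List Bool) :
    #(supersequences n s) = ∑ l ∈ Icc s.length n, n.choose l := by
  induction n generalizing s with
  | zero => cases s <;> simp [card_supersequences_nil, supersequences_zero_cons]
  | succ n ih =>
    cases s with
    | nil => simp [card_supersequences_nil, ← Nat.range_succ_eq_Icc_zero, Nat.sum_range_choose]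
    | cons a s =>
      rw [card_supersequences_succ_cons, ih, ih, List.length_cons, Nat.sum_Icc_choose_succ_succ]

theorem stmt4_general (n : ℕ) (s : List Bool) :
    (univ.filter fun S : Fin n → Bool => s.Sublist (List.ofFn S)).card
      = ∑ l ∈ Finset.Icc s.length n, n.choose l :=
  card_supersequences n s

/-- The number of binary sequences of length `n` that contain a fixed binary sequence `s`
of length `m ≤ n` as a (not necessarily contiguous) subsequence equals
`∑_{l=m}^{n} C(n,l)`, the number of binary sequences of length `n` with at least `m` zeroes. -/
theorem stmt4 (n : ℕ) (s : List Bool) (h : s.length ≤ n) :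
    (univ.filter fun S : Fin n → Bool => s.Sublist (List.ofFn S)).card
      = ∑ l ∈ Finset.Icc s.length n, n.choose l :=
  stmt4_general n s
end

section
/- If S is a uniformly random binary sequence of length n and s is any fixed binary sequence of length m ≤ n, then the probability that s is a subsequence of S equals 2^{-n} times the sum over l from m to n of binomial(n, l); in particular, if m ≤ ⌊n/2⌋ this probability is greater than 1/2. -/
open Finset

/-!
Split on the first letter of `S`: if it equals the first letter of `s` it may be matched greedily,
otherwise it is useless. Hence the number of words of length `n` containing `s` depends only on
`m = |s|` and obeys Pascal's rule `c(n+1, m+1) = c(n, m) + c(n, m+1)` with `c(n, 0) = 2ⁿ`, which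
is solved by the binomial tail `∑_{l=m}^{n} C(n,l)`. When `2m ≤ n`, reflecting `l ↦ n - l` maps
the lower part `∑_{l<m} C(n,l)` into `∑_{m<l≤n} C(n,l)`, so the tail exceeds half of `2ⁿ`.
-/

namespace List

theorem cons_sublist_cons_iff_of_ne {α : Type*} {a b : α} {l l' : List α} (hab : a ≠ b) :
    a :: l <+ b :: l' ↔ a :: l <+ l' := by
  simp [sublist_cons_iff, hab]

end List

theorem Fin.card_filter_fun_succ {α : Type*} [Fintype α] {n : ℕ}
    (P : (Fin (n + 1) → α) → Prop) [DecidablePred P] :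
    #{S | P S} = ∑ a, #{T : Fin n → α | P (Fin.cons a T)} := by
  simp only [card_filter]
  rw [← (Fin.consEquiv fun _ => α).sum_comp, Fintype.sum_prod_type]
  rfl

def binomTail (n m : ℕ) : ℕ := ∑ l ∈ Icc m n, n.choose l

theorem binomTail_zero_right (n : ℕ) : binomTail n 0 = 2 ^ n := by
  rw [binomTail, ← Nat.sum_range_choose, range_eq_Ico, Ico_add_one_right_eq_Icc]

theorem binomTail_succ_succ (n m : ℕ) :
    binomTail (n + 1) (m + 1) = binomTail n m + binomTail n (m + 1) := by
  unfold binomTail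
  rw [← map_add_right_Icc m n 1, sum_map]
  simp only [addRightEmbedding_apply, Nat.choose_succ_succ', sum_add_distrib]
  congr 1
  rcases le_or_gt m n with h | h
  · calc ∑ l ∈ Icc m n, n.choose (l + 1) = ∑ l ∈ Icc (m + 1) (n + 1), n.choose l := by
          rw [← map_add_right_Icc, sum_map]; rfl
      _ = _ := by rw [sum_Icc_succ_top (by omega), Nat.choose_succ_self, add_zero]
  · simp [h, Icc_eq_empty_of_lt, Nat.lt_succ_of_lt h]

theorem two_pow_lt_two_mul_binomTail {n m : ℕ} (h : 2 * m ≤ n) : 2 ^ n < 2 * binomTail n m := by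
  have hsplit : ∑ l ∈ range m, n.choose l + binomTail n m = 2 ^ n := by
    rw [binomTail, ← Ico_add_one_right_eq_Icc, sum_range_add_sum_Ico _ (by omega),
      Nat.sum_range_choose]
  have hlow : ∑ l ∈ range m, n.choose l < binomTail n m := by
    calc ∑ l ∈ range m, n.choose l = ∑ l ∈ (range m).image (n - ·), n.choose l := by
          rw [sum_image (by intro a ha b hb hab; simp at ha hb hab; omega)]
          exact sum_congr rfl fun l hl => (Nat.choose_symm (by simp at hl; omega)).symm
      _ ≤ ∑ l ∈ Ioc m n, n.choose l := sum_le_sum_of_subset (by intro l; simp; omega)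
      _ < n.choose m + ∑ l ∈ Ioc m n, n.choose l := by simp [Nat.choose_pos (by omega : m ≤ n)]
      _ = binomTail n m := add_sum_Ioc_eq_sum_Icc (by omega)
  omega

theorem card_sublist_ofFn_eq_binomTail (n : ℕ) (s : List Bool) :
    #{S : Fin n → Bool | s.Sublist (List.ofFn S)} = binomTail n s.length := by
  induction n generalizing s with
  | zero =>
    cases s with
    | nil => simp [binomTail]
    | cons a t => simp [binomTail]
  | succ n ih =>
    cases s with
    | nil => simp [binomTail_zero_right]
    | cons a t =>
      rw [List.length_cons, binomTail_succ_succ, ← ih t, ← List.length_cons (a := a), ← ih,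
        Fin.card_filter_fun_succ, Fintype.sum_bool]
      cases a <;> simp [List.ofFn_succ, List.cons_sublist_cons_iff_of_ne, add_comm]

theorem stmt5_general (n : ℕ) (s : List Bool) :
    ((univ.filter fun S : Fin n → Bool => s.Sublist (List.ofFn S)).card : ℝ) / 2 ^ n
        = (1 / (2 : ℝ)) ^ n * ∑ l ∈ Finset.Icc s.length n, (n.choose l : ℝ)
    ∧ (s.length ≤ n / 2 →
        ((univ.filter fun S : Fin n → Bool => s.Sublist (List.ofFn S)).card : ℝ) / 2 ^ n
          > 1 / 2) := by
  rw [card_sublist_ofFn_eq_binomTail]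
  refine ⟨by simp [binomTail, div_eq_inv_mul], fun hs => ?_⟩
  have hlt : (2 : ℝ) ^ n < 2 * binomTail n s.length := by
    exact_mod_cast two_pow_lt_two_mul_binomTail (by omega)
  rw [gt_iff_lt, lt_div_iff₀ (by positivity)]
  linarith

/-- If `S` is a uniformly random binary sequence of length `n` and `s` a fixed binary
sequence of length `m ≤ n`, then `Pr[s is a subsequence of S] = 2⁻ⁿ ∑_{l=m}^{n} C(n,l)`;
in particular if `m ≤ ⌊n/2⌋` this probability is greater than `1/2`. -/
theorem stmt5 (n : ℕ) (s : List Bool) (h : s.length ≤ n) :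
    ((univ.filter fun S : Fin n → Bool => s.Sublist (List.ofFn S)).card : ℝ) / 2 ^ n
        = (1 / (2 : ℝ)) ^ n * ∑ l ∈ Finset.Icc s.length n, (n.choose l : ℝ)
    ∧ (s.length ≤ n / 2 →
        ((univ.filter fun S : Fin n → Bool => s.Sublist (List.ofFn S)).card : ℝ) / 2 ^ n
          > 1 / 2) :=
  stmt5_general n s
end

section
/- Let S be a uniformly random binary sequence of length n and let s be any fixed binary sequence of length ⌊n/2⌋ - k for some k ≥ 0. Then the probability that s is a subsequence of S is at least 1 - exp(-2k²/n). -/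
/-
Over a binary alphabet, whether `c :: s` embeds greedily into `a :: S` depends only on whether
`a = c`, so the number of words of length `n` containing `s` as a subsequence satisfies a
recursion that only sees `|s|`. Taking `s` to be `|s|` ones, that number counts the words with at
least `|s|` ones, and the complementary binomial tail is bounded by Chernoff's method with
Hoeffding's lemma `cosh x ≤ exp (x² / 2)`.
-/

open Finset Real

section Supersequences

variable {n : ℕ}

theorem sum_ofFn_succ {α M : Type*} [Fintype α] [AddCommMonoid M] (f : List α → M) :
    ∑ S : Fin (n + 1) → α, f (List.ofFn S) = ∑ a, ∑ S : Fin n → α, f (a :: List.ofFn S) := by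
  rw [← (Fin.consEquiv fun _ => α).sum_comp, Fintype.sum_prod_type]
  simp [Fin.consEquiv, List.ofFn_succ]

theorem card_filter_ofFn_succ {α : Type*} [Fintype α] (P : List α → Prop) [DecidablePred P] :
    #{S : Fin (n + 1) → α | P (List.ofFn S)} = ∑ a, #{S : Fin n → α | P (a :: List.ofFn S)} := by
  simp only [card_filter]
  exact sum_ofFn_succ fun l => if P l then 1 else 0

theorem cons_sublist_cons_iff_of_ne {α : Type*} {a c : α} {s l : List α} (h : a ≠ c) :
    (c :: s).Sublist (a :: l) ↔ (c :: s).Sublist l := by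
  simp [List.sublist_cons_iff, Ne.symm h]

theorem card_cons_sublist_ofFn_succ (c : Bool) (s : List Bool) :
    #{S : Fin (n + 1) → Bool | (c :: s).Sublist (List.ofFn S)}
      = #{S : Fin n → Bool | s.Sublist (List.ofFn S)}
        + #{S : Fin n → Bool | (c :: s).Sublist (List.ofFn S)} := by
  rw [card_filter_ofFn_succ, Fintype.sum_bool]
  cases c <;> simp [List.cons_sublist_cons, cons_sublist_cons_iff_of_ne, add_comm]

theorem card_sublist_ofFn_eq_of_length_eq :
    ∀ {n : ℕ} {s s' : List Bool}, s.length = s'.length →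
      #{S : Fin n → Bool | s.Sublist (List.ofFn S)} = #{S : Fin n → Bool | s'.Sublist (List.ofFn S)}
  | 0, s, s', h => by
    simp only [List.ofFn_zero, List.sublist_nil, ← List.length_eq_zero_iff, h]
  | _ + 1, [], [], _ => rfl
  | _ + 1, c :: s, c' :: s', h => by
    rw [card_cons_sublist_ofFn_succ, card_cons_sublist_ofFn_succ,
      card_sublist_ofFn_eq_of_length_eq (s := s) (s' := s') (by simpa using h),
      card_sublist_ofFn_eq_of_length_eq h]

theorem card_sublist_ofFn_eq_card_le_count (s : List Bool) :
    #{S : Fin n → Bool | s.Sublist (List.ofFn S)}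
      = #{S : Fin n → Bool | s.length ≤ (List.ofFn S).count true} := by
  simp only [← List.replicate_sublist_iff]
  exact card_sublist_ofFn_eq_of_length_eq (List.length_replicate).symm

theorem card_le_count_add_card_count_lt (m : ℕ) :
    #{S : Fin n → Bool | m ≤ (List.ofFn S).count true}
      + #{S : Fin n → Bool | (List.ofFn S).count true < m} = 2 ^ n := by
  simpa [not_le] using
    card_filter_add_card_filter_not (s := univ) fun S : Fin n → Bool => m ≤ (List.ofFn S).count true

end Supersequences

section Chernoff

theorem sum_pow_count_ofFn {R : Type*} [CommSemiring R] (x : R) :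
    ∀ n : ℕ, ∑ S : Fin n → Bool, x ^ (List.ofFn S).count true = (x + 1) ^ n
  | 0 => by simp
  | n + 1 => by
    rw [sum_ofFn_succ fun l => x ^ l.count true, Fintype.sum_bool]
    simp only [List.count_cons_self, List.count_cons_of_ne Bool.false_ne_true, pow_succ,
      ← Finset.sum_mul, sum_pow_count_ofFn x n]
    ring

theorem card_count_lt_le_exp_mul (n m : ℕ) {t : ℝ} (ht : 0 ≤ t) :
    (#{S : Fin n → Bool | (List.ofFn S).count true < m} : ℝ)
      ≤ exp (t * m) * (exp (-t) + 1) ^ n := by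
  rw [← sum_pow_count_ofFn, Finset.mul_sum, card_filter, Nat.cast_sum]
  refine Finset.sum_le_sum fun S _ => ?_
  rw [← exp_nat_mul, ← exp_add]
  split_ifs with hlt
  · exact_mod_cast one_le_exp (by
      have : ((List.ofFn S).count true : ℝ) ≤ m := by exact_mod_cast hlt.le
      nlinarith)
  · simp only [Nat.cast_zero]; positivity

theorem exp_neg_add_one_le (t : ℝ) : exp (-t) + 1 ≤ 2 * exp (-t / 2 + t ^ 2 / 8) := by
  have hcosh : exp (-t) + 1 = 2 * exp (-t / 2) * cosh (t / 2) := by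
    rw [cosh_eq, mul_comm 2, mul_assoc, mul_div_cancel₀ _ two_ne_zero, mul_add, ← exp_add,
      ← exp_add]
    ring_nf; rw [exp_zero, add_comm]
  calc exp (-t) + 1 = 2 * exp (-t / 2) * cosh (t / 2) := hcosh
    _ ≤ 2 * exp (-t / 2) * exp ((t / 2) ^ 2 / 2) := by gcongr; exact cosh_le_exp_half_sq _
    _ = 2 * exp (-t / 2 + t ^ 2 / 8) := by rw [mul_assoc, ← exp_add]; ring_nf

theorem card_count_lt_le (n m k : ℕ) (hmk : (m : ℝ) + k ≤ n / 2) :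
    (#{S : Fin n → Bool | (List.ofFn S).count true < m} : ℝ)
      ≤ 2 ^ n * exp (-(2 * (k : ℝ) ^ 2) / n) := by
  -- `t = 4k/n` minimises the exponent `-t k + n t² / 8` of the Chernoff bound.
  set t : ℝ := 4 * k / n
  have hexponent : t * m + n * (-t / 2 + t ^ 2 / 8) ≤ -(2 * (k : ℝ) ^ 2) / n := by
    rcases (Nat.zero_le n).eq_or_lt with rfl | hn
    · simp [t]
    · have hn : (0 : ℝ) < n := by exact_mod_cast hn
      rw [le_div_iff₀ hn]
      simp only [t]
      field_simp
      nlinarith [Nat.cast_nonneg (α := ℝ) k]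
  calc (#{S : Fin n → Bool | (List.ofFn S).count true < m} : ℝ)
      ≤ exp (t * m) * (exp (-t) + 1) ^ n := card_count_lt_le_exp_mul n m (by positivity)
    _ ≤ exp (t * m) * (2 * exp (-t / 2 + t ^ 2 / 8)) ^ n := by gcongr; exact exp_neg_add_one_le t
    _ = 2 ^ n * exp (t * m + n * (-t / 2 + t ^ 2 / 8)) := by
      rw [mul_pow, ← exp_nat_mul, exp_add]; ring
    _ ≤ 2 ^ n * exp (-(2 * (k : ℝ) ^ 2) / n) := by gcongr

end Chernoff

theorem stmt6_general (n k : ℕ) (s : List Bool) (hs : s.length = n / 2 - k) :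
    ((univ.filter fun S : Fin n → Bool => s.Sublist (List.ofFn S)).card : ℝ) / 2 ^ n
      ≥ 1 - Real.exp (-(2 * (k : ℝ) ^ 2) / n) := by
  have htail : (#{S : Fin n → Bool | (List.ofFn S).count true < s.length} : ℝ)
      ≤ 2 ^ n * exp (-(2 * (k : ℝ) ^ 2) / n) := by
    rcases le_or_gt k (n / 2) with hk | hk
    · refine card_count_lt_le n _ k ?_
      calc (s.length : ℝ) + k = ((n / 2 : ℕ) : ℝ) := by
            rw [← Nat.cast_add, hs, Nat.sub_add_cancel hk]
        _ ≤ n / 2 := Nat.cast_div_le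
    · simp only [show s.length = 0 by omega, Nat.not_lt_zero, filter_false, card_empty,
        Nat.cast_zero]
      positivity
  have hsplit : (#{S : Fin n → Bool | s.length ≤ (List.ofFn S).count true} : ℝ)
      + #{S : Fin n → Bool | (List.ofFn S).count true < s.length} = 2 ^ n := by
    exact_mod_cast card_le_count_add_card_count_lt s.length
  rw [card_sublist_ofFn_eq_card_le_count, ge_iff_le, le_div_iff₀ (by positivity)]
  linarith

/-- Let `S` be a uniformly random binary sequence of length `n ≥ 1` and `s` a fixed binary
sequence of length `⌊n/2⌋ - k` for some `k ≥ 0`. Then the probability that `s` is a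
subsequence of `S` is at least `1 - exp(-2k²/n)`. -/
theorem stmt6 (n k : ℕ) (hn : 0 < n) (s : List Bool) (hs : s.length = n / 2 - k) :
    ((univ.filter fun S : Fin n → Bool => s.Sublist (List.ofFn S)).card : ℝ) / 2 ^ n
      ≥ 1 - Real.exp (-(2 * (k : ℝ) ^ 2) / n) :=
  stmt6_general n k s hs
end

section
/- Let F be a family of hash functions from M to Z, and H an SU₂ family from Z to T, with M, Z, T finite. If F is ε'-almost universal₂, then the composition family G = H ∘ F (all compositions h ∘ f with h ∈ H, f ∈ F) is ε-almost strongly universal₂ with ε = ε'(1 - 1/|T|) + 1/|T|. -/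
/-!
Fix `m₁ ≠ m₂` and condition on the index `i` of `F`. If `F i` collides on `m₁, m₂`, the pair
`(t₁, t₂)` is hit by at most `|J|/|T|` of the `h ∈ H` (only the first coordinate constrains `h`);
otherwise strong universality gives exactly `|J|/|T|²`. Since collisions occur for at most
`ε' |I|` indices, the total is at most `|I||J|/|T|² + ε' |I| (|J|/|T| - |J|/|T|²)`, which is the
claimed bound.
-/

open Finset

lemma card_filter_prod_eq_sum {I J : Type*} [Fintype I] [Fintype J]
    (P : I → J → Prop) [∀ i j, Decidable (P i j)] :
    (univ.filter fun p : I × J => P p.1 p.2).card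
      = ∑ i : I, (univ.filter fun j => P i j).card := by
  rw [card_filter, Fintype.sum_prod_type]
  exact sum_congr rfl fun i _ => (card_filter _ _).symm

lemma sum_ite_eq_card_mul_add_card_filter_mul_sub {I : Type*} [Fintype I] (p : I → Prop)
    [DecidablePred p] (a b : ℝ) :
    ∑ i, (if p i then a else b) = Fintype.card I * b + (univ.filter p).card * (a - b) := by
  rw [sum_ite, sum_const, sum_const, nsmul_eq_mul, nsmul_eq_mul, ← card_univ,
    ← card_filter_add_card_filter_not (s := univ) (p := p)]
  push_cast
  ring

lemma div_natCast_sq_le_div_natCast {a : ℝ} (ha : 0 ≤ a) (n : ℕ) :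
    a / (n : ℝ) ^ 2 ≤ a / n := by
  rcases Nat.eq_zero_or_pos n with rfl | hn
  · simp
  · exact div_le_div_of_nonneg_left ha (by positivity)
      (by exact_mod_cast Nat.le_self_pow two_ne_zero n)

section Composition

variable {Z T I J : Type*} [Fintype T] [Fintype I] [Fintype J] [DecidableEq T]

lemma card_filter_comp_eq_of_uniform (g : I → Z) (H : J → Z → T)
    (hH : ∀ z t, ((univ.filter fun j => H j z = t).card : ℝ)
        = (Fintype.card J : ℝ) / Fintype.card T) (t : T) :
    ((univ.filter fun p : I × J => H p.2 (g p.1) = t).card : ℝ)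
      = (Fintype.card I : ℝ) * Fintype.card J / Fintype.card T := by
  rw [card_filter_prod_eq_sum fun i j => H j (g i) = t]
  push_cast
  simp only [hH, sum_const, card_univ, nsmul_eq_mul]
  ring

lemma card_filter_and_le_ite [DecidableEq Z] (H : J → Z → T)
    (hH₁ : ∀ z t, ((univ.filter fun j => H j z = t).card : ℝ)
        = (Fintype.card J : ℝ) / Fintype.card T)
    (hH₂ : ∀ z₁ z₂ t₁ t₂, z₁ ≠ z₂ →
        ((univ.filter fun j => H j z₁ = t₁ ∧ H j z₂ = t₂).card : ℝ)
          = (Fintype.card J : ℝ) / (Fintype.card T : ℝ) ^ 2)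
    (z₁ z₂ : Z) (t₁ t₂ : T) :
    ((univ.filter fun j => H j z₁ = t₁ ∧ H j z₂ = t₂).card : ℝ)
      ≤ if z₁ = z₂ then (Fintype.card J : ℝ) / Fintype.card T
        else (Fintype.card J : ℝ) / (Fintype.card T : ℝ) ^ 2 := by
  split_ifs with hz
  · rw [← hH₁ z₁ t₁]
    exact_mod_cast card_le_card (monotone_filter_right _ fun _ _ => And.left)
  · exact (hH₂ z₁ z₂ t₁ t₂ hz).le

end Composition

theorem stmt7_general (M Z T I J : Type*) [Fintype T]
    [Fintype I] [Fintype J] [DecidableEq Z] [DecidableEq T]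
    (F : I → M → Z) (H : J → Z → T) (ε' : ℝ)
    (hSU2a : ∀ z t, ((univ.filter fun j => H j z = t).card : ℝ)
        = (Fintype.card J : ℝ) / Fintype.card T)
    (hSU2b : ∀ z₁ z₂ t₁ t₂, z₁ ≠ z₂ →
        ((univ.filter fun j => H j z₁ = t₁ ∧ H j z₂ = t₂).card : ℝ)
          = (Fintype.card J : ℝ) / (Fintype.card T : ℝ) ^ 2)
    (hAU2 : ∀ m₁ m₂ : M, m₁ ≠ m₂ →
        ((univ.filter fun i => F i m₁ = F i m₂).card : ℝ) ≤ ε' * Fintype.card I) :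
    (∀ (m : M) (t : T),
        ((univ.filter fun p : I × J => H p.2 (F p.1 m) = t).card : ℝ)
          = (Fintype.card I : ℝ) * Fintype.card J / Fintype.card T)
    ∧ (∀ (m₁ m₂ : M) (t₁ t₂ : T), m₁ ≠ m₂ →
        ((univ.filter fun p : I × J =>
            H p.2 (F p.1 m₁) = t₁ ∧ H p.2 (F p.1 m₂) = t₂).card : ℝ)
          ≤ (ε' * (1 - 1 / Fintype.card T) + 1 / Fintype.card T)
              * ((Fintype.card I : ℝ) * Fintype.card J) / Fintype.card T) := by
  refine ⟨fun m => card_filter_comp_eq_of_uniform (F · m) H hSU2a, ?_⟩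
  intro m₁ m₂ t₁ t₂ hm
  have hgap : 0 ≤ (Fintype.card J : ℝ) / Fintype.card T
      - (Fintype.card J : ℝ) / (Fintype.card T : ℝ) ^ 2 :=
    sub_nonneg.2 (div_natCast_sq_le_div_natCast (Nat.cast_nonneg _) _)
  calc ((univ.filter fun p : I × J =>
          H p.2 (F p.1 m₁) = t₁ ∧ H p.2 (F p.1 m₂) = t₂).card : ℝ)
      = ∑ i, ((univ.filter fun j => H j (F i m₁) = t₁ ∧ H j (F i m₂) = t₂).card : ℝ) := by
        rw [card_filter_prod_eq_sum fun i j => H j (F i m₁) = t₁ ∧ H j (F i m₂) = t₂]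
        push_cast
        rfl
    _ ≤ ∑ i, if F i m₁ = F i m₂ then (Fintype.card J : ℝ) / Fintype.card T
          else (Fintype.card J : ℝ) / (Fintype.card T : ℝ) ^ 2 :=
        sum_le_sum fun i _ => card_filter_and_le_ite H hSU2a hSU2b _ _ t₁ t₂
    _ = Fintype.card I * ((Fintype.card J : ℝ) / (Fintype.card T : ℝ) ^ 2)
          + (univ.filter fun i => F i m₁ = F i m₂).card
            * ((Fintype.card J : ℝ) / Fintype.card T
              - (Fintype.card J : ℝ) / (Fintype.card T : ℝ) ^ 2) :=
        sum_ite_eq_card_mul_add_card_filter_mul_sub _ _ _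
    _ ≤ Fintype.card I * ((Fintype.card J : ℝ) / (Fintype.card T : ℝ) ^ 2)
          + ε' * Fintype.card I
            * ((Fintype.card J : ℝ) / Fintype.card T
              - (Fintype.card J : ℝ) / (Fintype.card T : ℝ) ^ 2) := by
        gcongr
        exact hAU2 m₁ m₂ hm
    _ = _ := by ring

/-- Composition theorem ("if" direction): if `F` (indexed by `I`) is an `ε'`-almost
universal₂ family of hash functions `M → Z` and `H` (indexed by `J`) is a strongly
universal₂ family `Z → T`, then the composed family `G = H ∘ F` (indexed by `I × J`) is
`ε`-almost strongly universal₂ with `ε = ε'(1 - 1/|T|) + 1/|T|`. -/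
theorem stmt7 (M Z T I J : Type*) [Fintype M] [Fintype Z] [Fintype T]
    [Fintype I] [Fintype J] [DecidableEq Z] [DecidableEq T]
    (F : I → M → Z) (H : J → Z → T) (ε' : ℝ)
    (hSU2a : ∀ z t, ((univ.filter fun j => H j z = t).card : ℝ)
        = (Fintype.card J : ℝ) / Fintype.card T)
    (hSU2b : ∀ z₁ z₂ t₁ t₂, z₁ ≠ z₂ →
        ((univ.filter fun j => H j z₁ = t₁ ∧ H j z₂ = t₂).card : ℝ)
          = (Fintype.card J : ℝ) / (Fintype.card T : ℝ) ^ 2)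
    (hAU2 : ∀ m₁ m₂ : M, m₁ ≠ m₂ →
        ((univ.filter fun i => F i m₁ = F i m₂).card : ℝ) ≤ ε' * Fintype.card I) :
    (∀ (m : M) (t : T),
        ((univ.filter fun p : I × J => H p.2 (F p.1 m) = t).card : ℝ)
          = (Fintype.card I : ℝ) * Fintype.card J / Fintype.card T)
    ∧ (∀ (m₁ m₂ : M) (t₁ t₂ : T), m₁ ≠ m₂ →
        ((univ.filter fun p : I × J =>
            H p.2 (F p.1 m₁) = t₁ ∧ H p.2 (F p.1 m₂) = t₂).card : ℝ)
          ≤ (ε' * (1 - 1 / Fintype.card T) + 1 / Fintype.card T)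
              * ((Fintype.card I : ℝ) * Fintype.card J) / Fintype.card T) :=
  stmt7_general M Z T I J F H ε' hSU2a hSU2b hAU2
end

section
/- Let F be a family of functions M → Z and H an SU₂ family Z → T. For any distinct m₁, m₂ ∈ M and any t₁, t₂ ∈ T, the number of pairs (f,h) with h(f(m₁)) = t₁ and h(f(m₂)) = t₂ equals C·(δ_{t₁,t₂} - 1/|T|)·|H|/|T| + |F||H|/|T|², where C = |{f ∈ F : f(m₁) = f(m₂)}| and δ_{t₁,t₂} is 1 if t₁ = t₂ and 0 otherwise. -/
open Finset

/-- Counting identity for the composed family: for distinct `m₁, m₂` and any `t₁, t₂`, the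
number of pairs `(f, h)` with `h(f(m₁)) = t₁` and `h(f(m₂)) = t₂` equals
`C·(δ_{t₁,t₂} - 1/|T|)·|H|/|T| + |F||H|/|T|²`, where `C = |{f : f(m₁) = f(m₂)}|`. -/
theorem stmt10 (M Z T I J : Type*) [Fintype M] [Fintype Z] [Fintype T]
    [Fintype I] [Fintype J] [DecidableEq Z] [DecidableEq T]
    (F : I → M → Z) (H : J → Z → T)
    (hSU2a : ∀ z t, ((univ.filter fun j => H j z = t).card : ℝ)
        = (Fintype.card J : ℝ) / Fintype.card T)
    (hSU2b : ∀ z₁ z₂ t₁ t₂, z₁ ≠ z₂ →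
        ((univ.filter fun j => H j z₁ = t₁ ∧ H j z₂ = t₂).card : ℝ)
          = (Fintype.card J : ℝ) / (Fintype.card T : ℝ) ^ 2)
    (m₁ m₂ : M) (hm : m₁ ≠ m₂) (t₁ t₂ : T) :
    ((univ.filter fun p : I × J =>
        H p.2 (F p.1 m₁) = t₁ ∧ H p.2 (F p.1 m₂) = t₂).card : ℝ)
      = ((univ.filter fun i => F i m₁ = F i m₂).card : ℝ)
          * ((if t₁ = t₂ then (1 : ℝ) else 0) - 1 / Fintype.card T)
          * (Fintype.card J : ℝ) / Fintype.card T
        + (Fintype.card I : ℝ) * Fintype.card J / (Fintype.card T : ℝ) ^ 2 := by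
  have hT : (0:ℝ) < Fintype.card T := by
    have : Nonempty T := ⟨t₁⟩
    exact_mod_cast Fintype.card_pos
  have keyN : (univ.filter fun p : I × J =>
        H p.2 (F p.1 m₁) = t₁ ∧ H p.2 (F p.1 m₂) = t₂).card
      = ∑ i, (univ.filter fun j => H j (F i m₁) = t₁ ∧ H j (F i m₂) = t₂).card := by
    rw [Finset.card_filter, Fintype.sum_prod_type]
    exact Finset.sum_congr rfl fun i _ => (Finset.card_filter _ _).symm
  have hval : ∀ i, ((univ.filter fun j => H j (F i m₁) = t₁ ∧ H j (F i m₂) = t₂).card : ℝ)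
      = if F i m₁ = F i m₂
        then (if t₁ = t₂ then (Fintype.card J : ℝ) / Fintype.card T else 0)
        else (Fintype.card J : ℝ) / (Fintype.card T : ℝ) ^ 2 := by
    intro i
    by_cases h : F i m₁ = F i m₂
    · rw [if_pos h]
      by_cases ht : t₁ = t₂
      · rw [if_pos ht]
        rw [← hSU2a (F i m₁) t₁]
        have heq : (univ.filter fun j => H j (F i m₁) = t₁ ∧ H j (F i m₂) = t₂)
            = univ.filter fun j => H j (F i m₁) = t₁ := by
          apply Finset.filter_congr
          intro j _
          simp only [← h, ← ht, and_self]
        rw [heq]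
      · rw [if_neg ht]
        have : (univ.filter fun j => H j (F i m₁) = t₁ ∧ H j (F i m₂) = t₂) = ∅ := by
          apply Finset.filter_false_of_mem
          intro j _
          rintro ⟨h1, h2⟩
          exact ht (h1 ▸ h ▸ h2 ▸ rfl)
        simp [this]
    · rw [if_neg h]
      exact hSU2b _ _ _ _ h
  have hsum : (∑ i, ((univ.filter fun j => H j (F i m₁) = t₁ ∧ H j (F i m₂) = t₂).card : ℝ))
      = ((univ.filter fun i => F i m₁ = F i m₂).card : ℝ)
          * (if t₁ = t₂ then (Fintype.card J : ℝ) / Fintype.card T else 0)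
        + ((Fintype.card I : ℝ) - (univ.filter fun i => F i m₁ = F i m₂).card)
          * ((Fintype.card J : ℝ) / (Fintype.card T : ℝ) ^ 2) := by
    simp only [hval]
    rw [Finset.sum_ite, Finset.sum_const, Finset.sum_const]
    have hc : ((univ.filter fun i => ¬ F i m₁ = F i m₂).card : ℝ)
        = (Fintype.card I : ℝ) - (univ.filter fun i => F i m₁ = F i m₂).card := by
      have := Finset.card_filter_add_card_filter_not (s := (univ : Finset I))
        (p := fun i => F i m₁ = F i m₂)
      have h2 : (univ.filter fun i => F i m₁ = F i m₂).card
          + (univ.filter fun i => ¬ F i m₁ = F i m₂).card = Fintype.card I := by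
        simpa using this
      have := congrArg (fun n : ℕ => (n : ℝ)) h2
      push_cast at this
      linarith
    rw [nsmul_eq_mul, nsmul_eq_mul, hc]
  rw [keyN]
  push_cast
  rw [hsum]
  set C := ((univ.filter fun i => F i m₁ = F i m₂).card : ℝ)
  by_cases ht : t₁ = t₂ <;> simp only [ht, if_pos, if_true, if_neg, if_false] <;> field_simp <;> ring
end
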